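/- Let ε ∈ (0,1) and n ≥ 6 + 4ε/(1-ε). Define p₀ = n/(n-2) and p_{k+1} = (3-2ε) n p_k / ((2-ε+(1-ε)p_k) n - 2(3-2ε) p_k). Then the sequence (p_k) is increasing and converges to p_∞ = (1-ε)n / ((1-ε)n - 6 + 4ε). -/

import Mathlib

/-!
Inversion conjugates the recursion to an affine contraction: `u_k = 1 / p_k` satisfies
`u_{k+1} = ℓ + r (u_k - ℓ)` with `r = (2 - ε) / (3 - 2ε) ∈ (0, 1)` and
`ℓ = ((1 - ε) n - 6 + 4ε) / ((1 - ε) n) > 0`. Hence `u_k = ℓ + r^k (u_0 - ℓ)` decreases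
to `ℓ` because `u_0 > ℓ`, and `p_k = 1 / u_k` increases to `1 / ℓ = p_∞`.
-/

open Set Filter Topology

section InverseAffineOrbit

variable {r ℓ d : ℝ}

theorem eq_inv_affine_orbit_of_map_inv {g : ℝ → ℝ}
    (hg : ∀ x ≠ 0, g x⁻¹ = (ℓ + r * (x - ℓ))⁻¹) {p : ℕ → ℝ}
    (hrec : ∀ k, p (k + 1) = g (p k)) (hne : ∀ k, ℓ + r ^ k * ((p 0)⁻¹ - ℓ) ≠ 0) (k : ℕ) :
    p k = (ℓ + r ^ k * ((p 0)⁻¹ - ℓ))⁻¹ := by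
  induction k with
  | zero => simp
  | succ k ih =>
    rw [hrec, ih, hg _ (hne k), pow_succ]
    ring

theorem monotone_inv_affine_orbit (hℓ : 0 < ℓ) (hr₀ : 0 ≤ r) (hr₁ : r ≤ 1) (hd : 0 ≤ d) :
    Monotone fun k : ℕ => (ℓ + r ^ k * d)⁻¹ := by
  intro i j hij
  apply inv_anti₀ (by positivity)
  have := pow_le_pow_of_le_one hr₀ hr₁ hij
  gcongr

theorem tendsto_inv_affine_orbit (hℓ : ℓ ≠ 0) (hr₀ : 0 ≤ r) (hr₁ : r < 1) :
    Tendsto (fun k : ℕ => (ℓ + r ^ k * d)⁻¹) atTop (𝓝 ℓ⁻¹) := by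
  have h := (tendsto_pow_atTop_nhds_zero_of_lt_one hr₀ hr₁).mul_const d
  rw [zero_mul] at h
  simpa using (tendsto_const_nhds.add h).inv₀ (by simpa using hℓ)

end InverseAffineOrbit

noncomputable def recursionStep (ε n x : ℝ) : ℝ :=
  (3 - 2 * ε) * n * x / ((2 - ε + (1 - ε) * x) * n - 2 * (3 - 2 * ε) * x)

theorem recursionStep_inv {ε n : ℝ} (hε : ε < 1) (hn : n ≠ 0) {x : ℝ} (hx : x ≠ 0) :
    recursionStep ε n x⁻¹ =
      (((1 - ε) * n - 6 + 4 * ε) / ((1 - ε) * n) + (2 - ε) / (3 - 2 * ε) *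
        (x - ((1 - ε) * n - 6 + 4 * ε) / ((1 - ε) * n)))⁻¹ := by
  have h₁ : 1 - ε ≠ 0 := by linarith
  have h₃ : 3 - 2 * ε ≠ 0 := by linarith
  rw [recursionStep, ← inv_div]
  congr 1
  field_simp
  ring

theorem stmt12 (ε n : ℝ) (hε : ε ∈ Ioo (0:ℝ) 1)
    (hn : n > 6 + 4 * ε / (1 - ε)) (p : ℕ → ℝ)
    (hp0 : p 0 = n / (n - 2))
    (hrec : ∀ k, p (k + 1) =
      (3 - 2 * ε) * n * p k / ((2 - ε + (1 - ε) * p k) * n - 2 * (3 - 2 * ε) * p k)) :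
    Monotone p ∧
      Tendsto p atTop (nhds ((1 - ε) * n / ((1 - ε) * n - 6 + 4 * ε))) := by
  obtain ⟨hε₀, hε₁⟩ := hε
  have h₁ : 0 < 1 - ε := by linarith
  have hn₀ : 0 < n := by
    have : 0 ≤ 4 * ε / (1 - ε) := by positivity
    linarith
  have hnum : 0 < (1 - ε) * n - 6 + 4 * ε := by
    have := (div_lt_iff₀ h₁).mp (show 4 * ε / (1 - ε) < n - 6 by linarith)
    linarith
  set ℓ := ((1 - ε) * n - 6 + 4 * ε) / ((1 - ε) * n)
  set r := (2 - ε) / (3 - 2 * ε)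
  have hℓ : 0 < ℓ := by positivity
  have hr₀ : 0 ≤ r := div_nonneg (by linarith) (by linarith)
  have hr₁ : r < 1 := (div_lt_one (by linarith)).mpr (by linarith)
  have hgap : (p 0)⁻¹ - ℓ = 2 * (2 - ε) / ((1 - ε) * n) := by
    rw [hp0, inv_div]
    unfold ℓ
    field_simp
    ring
  have hgap₀ : 0 ≤ (p 0)⁻¹ - ℓ := by rw [hgap]; exact div_nonneg (by linarith) (by positivity)
  have hp : p = fun k => (ℓ + r ^ k * ((p 0)⁻¹ - ℓ))⁻¹ :=
    funext <| eq_inv_affine_orbit_of_map_inv (g := recursionStep ε n)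
      (fun _ hx => recursionStep_inv hε₁ hn₀.ne' hx) hrec
      (fun k => (add_pos_of_pos_of_nonneg hℓ (by positivity)).ne')
  rw [hp, ← inv_div]
  exact ⟨monotone_inv_affine_orbit hℓ hr₀ hr₁.le hgap₀, tendsto_inv_affine_orbit hℓ.ne' hr₀ hr₁⟩
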